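/- arXiv:2208.03844 — 2 statements merged into one kernel-verified Lean document; each statement's English description precedes it below -/
import Mathlib

section
/- Let T be the type of unlabeled binary trees and < the hereditary lexicographic order (generated by 0 < ⟨a,b⟩; a < c → ⟨a,b⟩ < ⟨c,d⟩; b < d → ⟨a,b⟩ < ⟨a,d⟩). Restricted to Cantor normal forms, the relation < is well-founded. -/
/-- Unlabelled binary trees. -/
inductive T : Type
  | zero : T
  | node : T → T → T

/-- The hereditary lexicographical order on binary trees. -/
inductive tlt : T → T → Prop
  | z {a b : T} : tlt T.zero (T.node a b)
  | l {a b c d : T} : tlt a c → tlt (T.node a b) (T.node c d)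
  | r {a b d : T} : tlt b d → tlt (T.node a b) (T.node a d)

/-- The reflexive closure of `tlt`. -/
def tle (s t : T) : Prop := tlt s t ∨ s = t

/-- The left subtree, if it exists. -/
def left : T → T
  | T.zero => T.zero
  | T.node a _ => a

/-- The Cantor normal form predicate. -/
inductive isCNF : T → Prop
  | z : isCNF T.zero
  | n {s t : T} : isCNF s → isCNF t → tle (left t) s → isCNF (T.node s t)

/-! Reading a tree `⟨a, b⟩` as the ordinal `ω ^ a + b` turns `tlt` into `<` on Cantor normal
forms, so well-foundedness is inherited from the ordinals. The invariant making `l`-steps go up is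
that a normal form `s` lies below `ω ^ (left s + 1)`. It is proved simultaneously with
monotonicity, because the bound for `⟨a, b⟩` needs monotonicity at `left b < a`. -/

open Ordinal

noncomputable def T.toOrdinal : T → Ordinal.{0}
  | T.zero => 0
  | T.node a b => ω ^ a.toOrdinal + b.toOrdinal

theorem T.toOrdinal_node_lt_opow_succ {a b : T}
    (hb : b.toOrdinal < ω ^ ((left b).toOrdinal + 1))
    (hba : (left b).toOrdinal ≤ a.toOrdinal) :
    (T.node a b).toOrdinal < ω ^ (a.toOrdinal + 1) :=
  isPrincipal_add_omega0_opow _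
    ((opow_lt_opow_iff_right one_lt_omega0).2 (lt_add_one _))
    (hb.trans_le (opow_le_opow_right omega0_pos (add_le_add_left hba 1)))

theorem T.toOrdinal_node_lt_node {a b c : T} (d : T)
    (hab : (T.node a b).toOrdinal < ω ^ (a.toOrdinal + 1))
    (hac : a.toOrdinal < c.toOrdinal) :
    (T.node a b).toOrdinal < (T.node c d).toOrdinal :=
  calc (T.node a b).toOrdinal < ω ^ (a.toOrdinal + 1) := hab
    _ ≤ ω ^ c.toOrdinal := opow_le_opow_right omega0_pos (Order.add_one_le_of_lt hac)
    _ ≤ (T.node c d).toOrdinal := le_self_add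

theorem isCNF.toOrdinal_lt_opow_and_lt_of_tlt : ∀ {s : T}, isCNF s →
    s.toOrdinal < ω ^ ((left s).toOrdinal + 1) ∧
      ∀ t, isCNF t → tlt s t → s.toOrdinal < t.toOrdinal
  | _, .z => by
    refine ⟨opow_pos _ omega0_pos, fun t _ hst => ?_⟩
    cases hst
    exact (opow_pos _ omega0_pos).trans_le le_self_add
  | _, .n (s := a) (t := b) ha hb hba => by
    have hleft : (left b).toOrdinal ≤ a.toOrdinal := by
      rcases hba with hlt | heq
      · match b, hb with
        | .zero, _ => exact zero_le
        | .node _ _, .n hc _ _ =>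
          exact ((toOrdinal_lt_opow_and_lt_of_tlt hc).2 a ha hlt).le
      · rw [heq]
    have hbound :=
      T.toOrdinal_node_lt_opow_succ (toOrdinal_lt_opow_and_lt_of_tlt hb).1 hleft
    refine ⟨hbound, fun t ht hst => ?_⟩
    cases hst with
    | l hac =>
      cases ht with
      | n hc _ _ =>
        exact T.toOrdinal_node_lt_node _ hbound
          ((toOrdinal_lt_opow_and_lt_of_tlt ha).2 _ hc hac)
    | r hbd =>
      cases ht with
      | n _ hd _ =>
        exact add_lt_add_right ((toOrdinal_lt_opow_and_lt_of_tlt hb).2 _ hd hbd) _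

theorem isCNF.toOrdinal_lt_toOrdinal {s t : T} (hs : isCNF s) (ht : isCNF t) (hst : tlt s t) :
    s.toOrdinal < t.toOrdinal :=
  (hs.toOrdinal_lt_opow_and_lt_of_tlt).2 t ht hst

/-- The hereditary lexicographic order is well-founded on Cantor normal forms. -/
theorem tlt_wellFounded_on_cnf :
    WellFounded (fun a b : {t : T // isCNF t} => tlt a.1 b.1) :=
  Subrelation.wf (fun {a b} h => isCNF.toOrdinal_lt_toOrdinal a.2 b.2 h)
    (InvImage.wf (fun a : {t : T // isCNF t} => a.1.toOrdinal) Ordinal.lt_wf)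
end

section
/- Cantor normal forms have left subtraction: for all CNFs a, b with a ≤ b, there exists a CNF c such that a + c = b. -/
open Classical in
/-- Addition of Cantor normal forms. -/
noncomputable def tadd : T → T → T
  | T.zero, b => b
  | a, T.zero => a
  | T.node a c, T.node b d =>
      if tlt a b then T.node b d else T.node a (tadd c (T.node b d))

/-!
Induct on `a = ⟨a₁, a₂⟩ < b`. If `a₁ < left b`, then `a + b = b`. Otherwise `b = ⟨a₁, b₂⟩` with
`a₂ < b₂`; subtracting `a₂` from `b₂` gives a CNF `c` with `a₂ + c = b₂`. Adding never lowers the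
leading exponent, so `left c ≤ left b₂ ≤ a₁` by the CNF condition on `b`, whence
`a + c = ⟨a₁, a₂ + c⟩ = b`.
-/

lemma tlt_irrefl (a : T) : ¬ tlt a a := by
  induction a with
  | zero => intro h; cases h
  | node a₁ a₂ ih₁ ih₂ =>
    intro h
    cases h with
    | l h => exact ih₁ h
    | r h => exact ih₂ h

lemma tlt_trans {a b c : T} (hab : tlt a b) (hbc : tlt b c) : tlt a c := by
  induction a generalizing b c with
  | zero => cases hbc <;> exact tlt.z
  | node a₁ a₂ ih₁ ih₂ =>
    cases hab with
    | l h =>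
      cases hbc with
      | l h' => exact tlt.l (ih₁ h h')
      | r _ => exact tlt.l h
    | r h =>
      cases hbc with
      | l h' => exact tlt.l h'
      | r h' => exact tlt.r (ih₂ h h')

lemma tlt_trichotomy (a b : T) : tlt a b ∨ a = b ∨ tlt b a := by
  induction a generalizing b with
  | zero =>
    cases b with
    | zero => exact Or.inr (Or.inl rfl)
    | node => exact Or.inl tlt.z
  | node a₁ a₂ ih₁ ih₂ =>
    cases b with
    | zero => exact Or.inr (Or.inr tlt.z)
    | node b₁ b₂ =>
      rcases ih₁ b₁ with h | rfl | h
      · exact Or.inl (tlt.l h)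
      · rcases ih₂ b₂ with h | rfl | h
        · exact Or.inl (tlt.r h)
        · exact Or.inr (Or.inl rfl)
        · exact Or.inr (Or.inr (tlt.r h))
      · exact Or.inr (Or.inr (tlt.l h))

lemma tle_trans {a b c : T} (hab : tle a b) (hbc : tle b c) : tle a c := by
  rcases hab with hab | rfl
  · rcases hbc with hbc | rfl
    · exact Or.inl (tlt_trans hab hbc)
    · exact Or.inl hab
  · exact hbc

lemma not_tlt_of_tle {a b : T} (h : tle a b) : ¬ tlt b a := by
  rcases h with h | rfl
  · exact fun h' => tlt_irrefl a (tlt_trans h h')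
  · exact tlt_irrefl a

lemma tle_of_not_tlt {a b : T} (h : ¬ tlt a b) : tle b a := by
  rcases tlt_trichotomy a b with h' | rfl | h'
  · exact absurd h' h
  · exact Or.inr rfl
  · exact Or.inl h'

lemma zero_tle (a : T) : tle T.zero a := by
  cases a with
  | zero => exact Or.inr rfl
  | node => exact Or.inl tlt.z

lemma zero_tadd (a : T) : tadd T.zero a = a := by
  cases a <;> rfl

lemma tadd_zero (a : T) : tadd a T.zero = a := by
  cases a <;> rfl

lemma tadd_node_of_tlt_left {a x c : T} (h : tlt a (left c)) : tadd (T.node a x) c = c := by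
  cases c with
  | zero => cases h
  | node c₁ c₂ => exact if_pos h

lemma tadd_node_of_not_tlt_left {a x c : T} (h : ¬ tlt a (left c)) :
    tadd (T.node a x) c = T.node a (tadd x c) := by
  cases c with
  | zero => rw [tadd_zero, tadd_zero]
  | node c₁ c₂ => exact if_neg h

lemma left_tle_left_tadd (x c : T) : tle (left c) (left (tadd x c)) := by
  cases x with
  | zero => rw [zero_tadd]; exact Or.inr rfl
  | node x₁ x₂ =>
    by_cases h : tlt x₁ (left c)
    · rw [tadd_node_of_tlt_left h]; exact Or.inr rfl
    · rw [tadd_node_of_not_tlt_left h]; exact tle_of_not_tlt h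

theorem exists_isCNF_tadd_eq_of_tle {a b : T} (hb : isCNF b) (hab : tle a b) :
    ∃ c, isCNF c ∧ tadd a c = b := by
  induction a generalizing b with
  | zero => exact ⟨b, hb, zero_tadd b⟩
  | node a₁ a₂ _ ih₂ =>
    rcases hab with hab | rfl
    · cases hab with
      | l h => exact ⟨_, hb, tadd_node_of_tlt_left h⟩
      | r h =>
        cases hb with
        | n _ hb₂ hleft =>
          obtain ⟨c, hc, rfl⟩ := ih₂ hb₂ (Or.inl h)
          refine ⟨c, hc, tadd_node_of_not_tlt_left ?_⟩
          exact not_tlt_of_tle (tle_trans (left_tle_left_tadd a₂ c) hleft)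
    · exact ⟨T.zero, isCNF.z, tadd_zero _⟩

/-- CNFs have left subtraction: if `a ≤ b` there is a CNF `c` with `a + c = b`. -/
theorem cnf_subtraction :
    ∀ a b : T, isCNF a → isCNF b → tle a b →
      ∃ c : T, isCNF c ∧ tadd a c = b :=
  fun _ _ _ hb hab => exists_isCNF_tadd_eq_of_tle hb hab
end
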